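/- (Theorem 1, single-mode case with cell boundaries not all through the origin.) Let A ∈ ℝ^{n×n}, B ∈ ℝ^{n×p}, C ∈ ℝ^{k×n} define a mode of the concrete PWA system, and F ∈ ℝ^{m×m}, G ∈ ℝ^{m×q}, H ∈ ℝ^{k×m}, L ∈ ℝ^{q×m} define the transformed linear abstraction. Let P ∈ ℝ^{n×m}, Q ∈ ℝ^{p×m} satisfy H = C P and P F = A P + B Q, and let R ∈ ℝ^{p×q}, K ∈ ℝ^{p×n} be interface gains. Set N = n + m, A′ = diag(A + B K, F + G L), Ā = diag(A′, 0) ∈ ℝ^{(N+1)×(N+1)}, C̄ = [C 0 0] ∈ ℝ^{k×(N+1)}, and let M̄ = diag(M, m₀) with M symmetric positive definite N×N and m₀ > 0, Λ̄ = diag(λI_N, 0) with λ > 0, κ > 0. Let Ē be a b×(N+1) matrix and W a symmetric matrix with nonnegative entries, such that M̄ − C̄ᵀC̄ ⪰ 0 and ĀᵀM̄ + M̄Ā + ĒᵀWĒ + Λ̄M̄ ⪯ 0. Suppose x₁ : ℝ → ℝⁿ and x₂ : ℝ → ℝᵐ satisfy, for all t ≥ 0: x₁ has derivative A x₁(t)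 + B u₁(t) + c(t) at t with u₁(t) = R ū₂(t) + (Q + R L) x₂(t) + K(x₁(t) − P x₂(t)); x₂ has derivative (F + G L) x₂(t) + G ū₂(t) at t; the augmented joint state ω̄(t) = (x₁(t) − P x₂(t), x₂(t), 1) ∈ ℝ^{N+1} satisfies Ē ω̄(t) ≥ 0 entrywise; and the vectors v₁(t) = ((B R − P G) L x₂(t), 0), v₂(t) = ((B R − P G) ū₂(t), G ū₂(t)), c′(t) = (c(t), 0) in ℝ^N satisfy √(v₁(t)ᵀMv₁(t)) ≤ β₁, √(v₂(t)ᵀMv₂(t)) ≤ β₂, √(c′(t)ᵀMc′(t)) ≤ β₃. Then for all t ≥ 0, ‖C x₁(t) − H x₂(t)‖ ≤ max( κ·V(ω̄(0)), √m₀ + (2/λ)(β₁ + β₂ + β₃) ), where V(ω̄) = (1/κ)√(ω̄ᵀM̄ω̄). -/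

import Mathlib

/-!
Along the tracking error `s = (x₁ - P x₂, x₂)` the quadratic form `ω̄ᵀ M̄ ω̄ = sᵀ M s + m₀` is a
Lyapunov function. Because `P F = A P + B Q`, the error obeys `ṡ = A' s + v₁ + v₂ + c'`.
Inside the cell `Ē ω̄ ≥ 0` the S-procedure term `ω̄ᵀ Ēᵀ W Ē ω̄` is nonnegative, so the LMI gives
`2 sᵀ M A' s ≤ -λ sᵀ M s`, while Cauchy–Schwarz for the inner product of `M` bounds the
input terms by `√(sᵀ M s) (β₁ + β₂ + β₃)`. Hence `√(ω̄ᵀ M̄ ω̄)` cannot grow once it exceeds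
`√m₀ + (2/λ)(β₁ + β₂ + β₃)`, and the output LMI `C̄ᵀ C̄ ⪯ M̄` bounds
`‖C x₁ - H x₂‖ = ‖C (x₁ - P x₂)‖` by it.
-/

open Matrix

def aug {α : Type*} (v : α → ℝ) : α ⊕ Unit → ℝ := Sum.elim v fun _ => 1

theorem Matrix.IsSymm.dotProduct_mulVec_comm {ι : Type*} [Fintype ι] {M : Matrix ι ι ℝ}
    (hM : M.IsSymm) (u v : ι → ℝ) : u ⬝ᵥ M *ᵥ v = v ⬝ᵥ M *ᵥ u := by
  rw [dotProduct_mulVec, ← mulVec_transpose, hM.eq, dotProduct_comm]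

theorem Matrix.PosSemidef.dotProduct_mulVec_le_sqrt_mul_sqrt {ι : Type*} [Fintype ι]
    {M : Matrix ι ι ℝ} (hM : M.PosSemidef) (u v : ι → ℝ) :
    u ⬝ᵥ M *ᵥ v ≤ √(u ⬝ᵥ M *ᵥ u) * √(v ⬝ᵥ M *ᵥ v) := by
  classical
  have hsq : (u ⬝ᵥ M *ᵥ v) ^ 2 ≤ (u ⬝ᵥ M *ᵥ u) * (v ⬝ᵥ M *ᵥ v) := by
    have := M.toBilin'.apply_mul_apply_le_of_forall_zero_le
      (fun x => by simpa [toBilin'_apply'] using hM.dotProduct_mulVec_nonneg x) u v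
    rwa [toBilin'_apply', toBilin'_apply', toBilin'_apply', toBilin'_apply',
      (isHermitian_iff_isSymm.1 hM.isHermitian).dotProduct_mulVec_comm v, ← sq] at this
  rw [← Real.sqrt_mul (by simpa using hM.dotProduct_mulVec_nonneg u)]
  exact Real.le_sqrt_of_sq_le hsq

theorem Matrix.PosSemidef.dotProduct_mulVec_le_sqrt_mul_of_sqrt_le {ι : Type*} [Fintype ι]
    {M : Matrix ι ι ℝ} (hM : M.PosSemidef) (u : ι → ℝ) {v : ι → ℝ} {β : ℝ}
    (hv : √(v ⬝ᵥ M *ᵥ v) ≤ β) : u ⬝ᵥ M *ᵥ v ≤ √(u ⬝ᵥ M *ᵥ u) * β :=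
  (hM.dotProduct_mulVec_le_sqrt_mul_sqrt u v).trans
    (mul_le_mul_of_nonneg_left hv (Real.sqrt_nonneg _))

theorem Matrix.dotProduct_mulVec_nonneg_of_nonneg {ι : Type*} [Fintype ι]
    {W : Matrix ι ι ℝ} (hW : ∀ i j, 0 ≤ W i j) {v : ι → ℝ} (hv : 0 ≤ v) :
    0 ≤ v ⬝ᵥ W *ᵥ v :=
  dotProduct_nonneg_of_nonneg hv fun i => dotProduct_nonneg_of_nonneg (hW i) hv

theorem Matrix.dotProduct_mulVec_le_of_posSemidef_sub {ι κ : Type*} [Fintype ι] [Fintype κ]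
    {X : Matrix ι ι ℝ} {Y : Matrix κ ι ℝ} (h : (X - Yᵀ * Y).PosSemidef) (v : ι → ℝ) :
    (Y *ᵥ v) ⬝ᵥ (Y *ᵥ v) ≤ v ⬝ᵥ X *ᵥ v := by
  have := h.dotProduct_mulVec_nonneg v
  rwa [star_trivial, sub_mulVec, dotProduct_sub, ← mulVec_mulVec, dotProduct_mulVec v Yᵀ,
    vecMul_transpose, sub_nonneg] at this

theorem HasDerivAt.dotProduct {ι : Type*} [Fintype ι] {f g : ℝ → ι → ℝ} {f' g' : ι → ℝ}
    {t : ℝ} (hf : HasDerivAt f f' t) (hg : HasDerivAt g g' t) :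
    HasDerivAt (fun t => f t ⬝ᵥ g t) (f' ⬝ᵥ g t + f t ⬝ᵥ g') t := by
  show HasDerivAt (fun t => ∑ i, f t i * g t i) (∑ i, f' i * g t i + ∑ i, f t i * g' i) t
  rw [← Finset.sum_add_distrib]
  exact HasDerivAt.fun_sum (u := Finset.univ) fun i _ =>
    (hasDerivAt_pi.1 hf i).fun_mul (hasDerivAt_pi.1 hg i)

theorem HasDerivAt.mulVec {ι κ : Type*} [Fintype ι] [Fintype κ] (M : Matrix κ ι ℝ)
    {f : ℝ → ι → ℝ} {f' : ι → ℝ} {t : ℝ} (hf : HasDerivAt f f' t) :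
    HasDerivAt (fun t => M *ᵥ f t) (M *ᵥ f') t :=
  (LinearMap.toContinuousLinearMap M.mulVecLin).hasFDerivAt.comp_hasDerivAt t hf

theorem HasDerivAt.dotProduct_mulVec_self {ι : Type*} [Fintype ι] {M : Matrix ι ι ℝ}
    (hM : M.IsSymm) {f : ℝ → ι → ℝ} {f' : ι → ℝ} {t : ℝ} (hf : HasDerivAt f f' t) :
    HasDerivAt (fun t => f t ⬝ᵥ M *ᵥ f t) (2 * (f t ⬝ᵥ M *ᵥ f')) t := by
  convert hf.dotProduct (hf.mulVec M) using 1
  rw [hM.dotProduct_mulVec_comm f', two_mul]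

theorem HasDerivAt.sumElim {ι κ : Type*} {f : ℝ → ι → ℝ} {g : ℝ → κ → ℝ} {f' : ι → ℝ}
    {g' : κ → ℝ} {t : ℝ} (hf : HasDerivAt f f' t) (hg : HasDerivAt g g' t) :
    HasDerivAt (fun t => Sum.elim (f t) (g t)) (Sum.elim f' g') t :=
  hasDerivAt_pi.2 fun i => i.rec (hasDerivAt_pi.1 hf) (hasDerivAt_pi.1 hg)

theorem le_of_hasDerivAt_nonpos_of_le {f f' : ℝ → ℝ} {K : ℝ}
    (hf : ∀ t ≥ 0, HasDerivAt f (f' t) t) (h₀ : f 0 ≤ K)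
    (hf' : ∀ t ≥ 0, K ≤ f t → f' t ≤ 0) : ∀ t ≥ 0, f t ≤ K := by
  intro t ht
  refine le_of_forall_pos_le_add fun ε hε => ?_
  -- the fence lemma needs a strict slope at contact: compare `f` with `K + δ (x + 1)`
  set δ := ε / (t + 1)
  have hδ : 0 < δ := by positivity
  have hfence := image_le_of_deriv_right_lt_deriv_boundary (a := 0) (b := t)
    (B := fun x => K + δ * (x + 1)) (B' := fun _ => δ)
    (fun x hx => (hf x hx.1).continuousAt.continuousWithinAt)
    (fun x hx => (hf x hx.1).hasDerivWithinAt) (by simp only [zero_add, mul_one]; linarith)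
    (fun x => by simpa using ((hasDerivAt_id x).add_const 1).const_mul δ |>.const_add K)
    (fun x hx hfx => (hf' x hx.1 (by nlinarith [hx.1])).trans_lt hδ)
    ⟨ht, le_rfl⟩
  have : δ * (t + 1) = ε := div_mul_cancel₀ ε (by positivity)
  linarith

theorem sqrt_le_max_of_hasDerivAt {f f' : ℝ → ℝ} {τ : ℝ}
    (hf : ∀ t ≥ 0, HasDerivAt f (f' t) t) (hf' : ∀ t ≥ 0, τ ≤ √(f t) → f' t ≤ 0) :
    ∀ t ≥ 0, √(f t) ≤ max √(f 0) τ := by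
  have hK : 0 ≤ max √(f 0) τ := (Real.sqrt_nonneg _).trans (le_max_left _ _)
  have hbound := le_of_hasDerivAt_nonpos_of_le hf
    (Real.sqrt_le_iff.1 (le_max_left √(f 0) τ)).2 fun t ht hft =>
      hf' t ht ((le_max_right _ _).trans ((le_abs_self _).trans (Real.abs_le_sqrt hft)))
  exact fun t ht => Real.sqrt_le_iff.2 ⟨hK, hbound t ht⟩

theorem two_mul_add_nonpos_of_le_sqrt {q m₀ lam β a x : ℝ} (hq : 0 ≤ q) (hm₀ : 0 ≤ m₀)
    (hlam : 0 < lam) (ha : 2 * a ≤ -lam * q) (hx : x ≤ √q * β)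
    (hV : √m₀ + 2 / lam * β ≤ √(q + m₀)) : 2 * (a + x) ≤ 0 := by
  rcases lt_or_ge β 0 with hβ | hβ
  · nlinarith [Real.sqrt_nonneg q]
  set V := √(q + m₀)
  set d := √m₀
  have hV2 : V ^ 2 = q + m₀ := Real.sq_sqrt (by positivity)
  have hd2 : d ^ 2 = m₀ := Real.sq_sqrt hm₀
  have hqV : √q ≤ V := Real.sqrt_le_sqrt (by linarith)
  -- `hV` scaled by `lam`: the decay `lam (V² - d²)` then dominates the input term `2 V β`
  have hβV : 2 * β ≤ lam * (V - d) := by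
    have := mul_le_mul_of_nonneg_left hV hlam.le
    rw [mul_add, ← mul_assoc, mul_div_cancel₀ _ hlam.ne'] at this
    linarith
  have hdV : d ≤ V := by nlinarith [Real.sqrt_nonneg m₀]
  nlinarith [mul_le_mul_of_nonneg_right hqV hβ, mul_le_mul_of_nonneg_left hβV
    (Real.sqrt_nonneg (q + m₀)), Real.sqrt_nonneg m₀, mul_nonneg hlam.le (sub_nonneg.2 hdV)]

theorem norm_euclideanSpace_equiv_symm {ι : Type*} [Fintype ι] (v : ι → ℝ) :
    ‖(EuclideanSpace.equiv ι ℝ).symm v‖ = √(v ⬝ᵥ v) := by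
  rw [EuclideanSpace.norm_eq]
  simp [dotProduct, sq]

section Augmented

variable {α : Type*} [Fintype α]

theorem aug_dotProduct_fromBlocks_mulVec_aug (X : Matrix α α ℝ) (D : Matrix Unit Unit ℝ)
    (s : α → ℝ) : aug s ⬝ᵥ fromBlocks X 0 0 D *ᵥ aug s = s ⬝ᵥ X *ᵥ s + D () () := by
  simp [aug, dotProduct, mulVec]

theorem two_mul_dotProduct_mulVec_le_of_posSemidef [DecidableEq α] {b : Type*} [Fintype b]
    {A M : Matrix α α ℝ} (hM : M.IsSymm) {m₀ lam : ℝ} {E : Matrix b (α ⊕ Unit) ℝ}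
    {W : Matrix b b ℝ} (hW : ∀ i j, 0 ≤ W i j)
    (hLMI : (-((fromBlocks A 0 0 0)ᵀ * fromBlocks M 0 0 (of fun _ _ => m₀)
        + fromBlocks M 0 0 (of fun _ _ => m₀) * fromBlocks A 0 0 0 + Eᵀ * W * E
        + fromBlocks (lam • (1 : Matrix α α ℝ)) 0 0 0
          * fromBlocks M 0 0 (of fun _ _ => m₀))).PosSemidef)
    {s : α → ℝ} (hs : 0 ≤ E *ᵥ aug s) :
    2 * (s ⬝ᵥ M *ᵥ (A *ᵥ s)) ≤ -lam * (s ⬝ᵥ M *ᵥ s) := by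
  have hblock : (fromBlocks A 0 0 0)ᵀ * fromBlocks M 0 0 (of fun _ _ => m₀)
        + fromBlocks M 0 0 (of fun _ _ => m₀) * fromBlocks A 0 0 0 + Eᵀ * W * E
        + fromBlocks (lam • (1 : Matrix α α ℝ)) 0 0 0 * fromBlocks M 0 0 (of fun _ _ => m₀)
      = fromBlocks (Aᵀ * M + M * A + lam • M) 0 0 0 + Eᵀ * W * E := by
    rw [add_right_comm _ (Eᵀ * W * E)]
    congr 1
    simp [fromBlocks_transpose, fromBlocks_multiply, fromBlocks_add]
  have hq := hLMI.dotProduct_mulVec_nonneg (aug s)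
  rw [hblock, star_trivial, neg_mulVec, dotProduct_neg, neg_nonneg, add_mulVec, dotProduct_add,
    aug_dotProduct_fromBlocks_mulVec_aug, Matrix.zero_apply, add_zero, ← mulVec_mulVec,
    ← mulVec_mulVec, dotProduct_mulVec (aug s) Eᵀ, vecMul_transpose] at hq
  have hAM : s ⬝ᵥ (Aᵀ * M) *ᵥ s = s ⬝ᵥ M *ᵥ (A *ᵥ s) := by
    rw [← mulVec_mulVec, dotProduct_mulVec s Aᵀ, vecMul_transpose, hM.dotProduct_mulVec_comm]
  rw [add_mulVec, add_mulVec, dotProduct_add, dotProduct_add, hAM, ← mulVec_mulVec s M A,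
    smul_mulVec, dotProduct_smul, smul_eq_mul] at hq
  linarith [dotProduct_mulVec_nonneg_of_nonneg hW hs]

theorem dotProduct_le_of_posSemidef_sub_fromCols {α β γ : Type*} [Fintype α] [Fintype β]
    [Fintype γ] {M : Matrix (α ⊕ β) (α ⊕ β) ℝ} {m₀ : ℝ} {C : Matrix γ α ℝ}
    (hC : (fromBlocks M 0 0 (of fun _ _ => m₀)
      - (fromCols (fromCols C 0) 0 : Matrix γ ((α ⊕ β) ⊕ Unit) ℝ)ᵀ
        * (fromCols (fromCols C 0) 0 : Matrix γ ((α ⊕ β) ⊕ Unit) ℝ)).PosSemidef)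
    (e : α → ℝ) (x : β → ℝ) :
    (C *ᵥ e) ⬝ᵥ (C *ᵥ e) ≤ Sum.elim e x ⬝ᵥ M *ᵥ Sum.elim e x + m₀ := by
  have := dotProduct_mulVec_le_of_posSemidef_sub hC (aug (Sum.elim e x))
  rwa [aug_dotProduct_fromBlocks_mulVec_aug, aug, fromCols_mulVec_sumElim,
    fromCols_mulVec_sumElim, zero_mulVec, zero_mulVec, add_zero, add_zero] at this

end Augmented

theorem hasDerivAt_trackingError {n m p q : Type*} [Fintype n] [Fintype m] [Fintype p]
    [Fintype q] {A : Matrix n n ℝ} {B : Matrix n p ℝ} {F : Matrix m m ℝ} {G : Matrix m q ℝ}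
    {L : Matrix q m ℝ} {P : Matrix n m ℝ} {Q : Matrix p m ℝ} {R : Matrix p q ℝ}
    {K : Matrix p n ℝ} (hPF : P * F = A * P + B * Q) {x₁ c : ℝ → n → ℝ} {x₂ : ℝ → m → ℝ}
    {u₁ : ℝ → p → ℝ} {u₂ : ℝ → q → ℝ} {t : ℝ}
    (hx₁ : HasDerivAt x₁ (A *ᵥ x₁ t + B *ᵥ u₁ t + c t) t)
    (hu₁ : u₁ t = R *ᵥ u₂ t + (Q + R * L) *ᵥ x₂ t + K *ᵥ (x₁ t - P *ᵥ x₂ t))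
    (hx₂ : HasDerivAt x₂ ((F + G * L) *ᵥ x₂ t + G *ᵥ u₂ t) t) :
    HasDerivAt (fun t => Sum.elim (x₁ t - P *ᵥ x₂ t) (x₂ t))
      (fromBlocks (A + B * K) 0 0 (F + G * L) *ᵥ Sum.elim (x₁ t - P *ᵥ x₂ t) (x₂ t)
        + (Sum.elim ((B * R - P * G) *ᵥ (L *ᵥ x₂ t)) 0
          + Sum.elim ((B * R - P * G) *ᵥ u₂ t) (G *ᵥ u₂ t) + Sum.elim (c t) 0)) t := by
  refine ((hx₁.sub (hx₂.mulVec P)).sumElim hx₂).congr_deriv ?_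
  have hPF' : P *ᵥ (F *ᵥ x₂ t) = A *ᵥ (P *ᵥ x₂ t) + B *ᵥ (Q *ᵥ x₂ t) := by
    rw [mulVec_mulVec, hPF, add_mulVec, mulVec_mulVec, mulVec_mulVec]
  simp only [fromBlocks_mulVec, Sum.elim_comp_inl, Sum.elim_comp_inr, ← Sum.elim_add_add]
  congr 1
  · simp only [hu₁, zero_mulVec, add_mulVec, sub_mulVec, mulVec_add, mulVec_sub, ← mulVec_mulVec,
      hPF']
    abel
  · simp

theorem stmt_13_general {n m p q k b : ℕ}
    (A : Matrix (Fin n) (Fin n) ℝ) (B : Matrix (Fin n) (Fin p) ℝ)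
    (C : Matrix (Fin k) (Fin n) ℝ)
    (F : Matrix (Fin m) (Fin m) ℝ) (G : Matrix (Fin m) (Fin q) ℝ)
    (H : Matrix (Fin k) (Fin m) ℝ) (L : Matrix (Fin q) (Fin m) ℝ)
    (P : Matrix (Fin n) (Fin m) ℝ) (Q : Matrix (Fin p) (Fin m) ℝ)
    (R : Matrix (Fin p) (Fin q) ℝ) (K : Matrix (Fin p) (Fin n) ℝ)
    (hH : H = C * P) (hPF : P * F = A * P + B * Q)
    (M : Matrix (Fin n ⊕ Fin m) (Fin n ⊕ Fin m) ℝ) (hM : M.PosDef)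
    (m₀ lam κ : ℝ) (hm₀ : 0 < m₀) (hlam : 0 < lam) (hκ : 0 < κ)
    (Ebar : Matrix (Fin b) ((Fin n ⊕ Fin m) ⊕ Unit) ℝ)
    (W : Matrix (Fin b) (Fin b) ℝ) (hWpos : ∀ i j, 0 ≤ W i j)
    (hCLMI : (Matrix.fromBlocks M 0 0 (Matrix.of fun _ _ => m₀)
        - (Matrix.fromCols (Matrix.fromCols C 0) 0 :
            Matrix (Fin k) ((Fin n ⊕ Fin m) ⊕ Unit) ℝ)ᵀ
          * (Matrix.fromCols (Matrix.fromCols C 0) 0 :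
            Matrix (Fin k) ((Fin n ⊕ Fin m) ⊕ Unit) ℝ)).PosSemidef)
    (hLMI : (-((Matrix.fromBlocks
            (Matrix.fromBlocks (A + B * K) 0 0 (F + G * L)) 0 0 0)ᵀ
          * Matrix.fromBlocks M 0 0 (Matrix.of fun _ _ => m₀)
        + Matrix.fromBlocks M 0 0 (Matrix.of fun _ _ => m₀)
          * Matrix.fromBlocks (Matrix.fromBlocks (A + B * K) 0 0 (F + G * L)) 0 0 0
        + Ebarᵀ * W * Ebar
        + Matrix.fromBlocks (lam • (1 : Matrix (Fin n ⊕ Fin m) (Fin n ⊕ Fin m) ℝ)) 0 0 0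
          * Matrix.fromBlocks M 0 0 (Matrix.of fun _ _ => m₀))).PosSemidef)
    (x₁ : ℝ → Fin n → ℝ) (x₂ : ℝ → Fin m → ℝ)
    (u₁ : ℝ → Fin p → ℝ) (ubar₂ : ℝ → Fin q → ℝ) (c : ℝ → Fin n → ℝ)
    (β₁ β₂ β₃ : ℝ)
    (hx₁ : ∀ t ≥ (0 : ℝ), HasDerivAt x₁ (A *ᵥ x₁ t + B *ᵥ u₁ t + c t) t)
    (hu₁ : ∀ t ≥ (0 : ℝ),
      u₁ t = R *ᵥ ubar₂ t + (Q + R * L) *ᵥ x₂ t + K *ᵥ (x₁ t - P *ᵥ x₂ t))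
    (hx₂ : ∀ t ≥ (0 : ℝ), HasDerivAt x₂ ((F + G * L) *ᵥ x₂ t + G *ᵥ ubar₂ t) t)
    (hcell : ∀ t ≥ (0 : ℝ),
      ∀ i, 0 ≤ (Ebar *ᵥ aug (Sum.elim (x₁ t - P *ᵥ x₂ t) (x₂ t))) i)
    (hβ₁ : ∀ t ≥ (0 : ℝ),
      Real.sqrt (Sum.elim ((B * R - P * G) *ᵥ (L *ᵥ x₂ t)) 0 ⬝ᵥ
        M *ᵥ Sum.elim ((B * R - P * G) *ᵥ (L *ᵥ x₂ t)) 0) ≤ β₁)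
    (hβ₂ : ∀ t ≥ (0 : ℝ),
      Real.sqrt (Sum.elim ((B * R - P * G) *ᵥ ubar₂ t) (G *ᵥ ubar₂ t) ⬝ᵥ
        M *ᵥ Sum.elim ((B * R - P * G) *ᵥ ubar₂ t) (G *ᵥ ubar₂ t)) ≤ β₂)
    (hβ₃ : ∀ t ≥ (0 : ℝ),
      Real.sqrt (Sum.elim (c t) 0 ⬝ᵥ M *ᵥ Sum.elim (c t) 0) ≤ β₃) :
    ∀ t ≥ (0 : ℝ),
      ‖(EuclideanSpace.equiv (Fin k) ℝ).symm (C *ᵥ x₁ t - H *ᵥ x₂ t)‖ ≤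
        max (κ * ((1 / κ) * Real.sqrt (aug (Sum.elim (x₁ 0 - P *ᵥ x₂ 0) (x₂ 0)) ⬝ᵥ
            Matrix.fromBlocks M 0 0 (Matrix.of fun _ _ => m₀) *ᵥ
              aug (Sum.elim (x₁ 0 - P *ᵥ x₂ 0) (x₂ 0)))))
          (Real.sqrt m₀ + (2 / lam) * (β₁ + β₂ + β₃)) := by
  have hMs : M.IsSymm := isHermitian_iff_isSymm.1 hM.isHermitian
  set s : ℝ → Fin n ⊕ Fin m → ℝ := fun t => Sum.elim (x₁ t - P *ᵥ x₂ t) (x₂ t)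
  set w : ℝ → Fin n ⊕ Fin m → ℝ := fun t => Sum.elim ((B * R - P * G) *ᵥ (L *ᵥ x₂ t)) 0
    + Sum.elim ((B * R - P * G) *ᵥ ubar₂ t) (G *ᵥ ubar₂ t) + Sum.elim (c t) 0
  set A' := fromBlocks (A + B * K) 0 0 (F + G * L)
  have hV : ∀ t ≥ (0 : ℝ), HasDerivAt (fun t => s t ⬝ᵥ M *ᵥ s t + m₀)
      (2 * (s t ⬝ᵥ M *ᵥ (A' *ᵥ s t + w t))) t := fun t ht =>
    ((hasDerivAt_trackingError hPF (hx₁ t ht) (hu₁ t ht) (hx₂ t ht)).dotProduct_mulVec_self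
      hMs).add_const m₀
  have hw : ∀ t ≥ (0 : ℝ), s t ⬝ᵥ M *ᵥ w t ≤ √(s t ⬝ᵥ M *ᵥ s t) * (β₁ + β₂ + β₃) := by
    intro t ht
    simp only [w, mulVec_add, dotProduct_add, mul_add]
    exact add_le_add_three
      (hM.posSemidef.dotProduct_mulVec_le_sqrt_mul_of_sqrt_le _ (hβ₁ t ht))
      (hM.posSemidef.dotProduct_mulVec_le_sqrt_mul_of_sqrt_le _ (hβ₂ t ht))
      (hM.posSemidef.dotProduct_mulVec_le_sqrt_mul_of_sqrt_le _ (hβ₃ t ht))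
  have hdecay : ∀ t ≥ (0 : ℝ), √m₀ + 2 / lam * (β₁ + β₂ + β₃) ≤ √(s t ⬝ᵥ M *ᵥ s t + m₀) →
      2 * (s t ⬝ᵥ M *ᵥ (A' *ᵥ s t + w t)) ≤ 0 := fun t ht hτ => by
    rw [mulVec_add, dotProduct_add]
    exact two_mul_add_nonpos_of_le_sqrt (by simpa using hM.posSemidef.dotProduct_mulVec_nonneg _)
      hm₀.le hlam (two_mul_dotProduct_mulVec_le_of_posSemidef hMs hWpos hLMI (hcell t ht))
      (hw t ht) hτ
  intro t ht
  rw [norm_euclideanSpace_equiv_symm, hH, ← mulVec_mulVec, ← mulVec_sub,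
    aug_dotProduct_fromBlocks_mulVec_aug, of_apply, one_div, mul_inv_cancel_left₀ hκ.ne']
  calc √((C *ᵥ (x₁ t - P *ᵥ x₂ t)) ⬝ᵥ (C *ᵥ (x₁ t - P *ᵥ x₂ t)))
      ≤ √(s t ⬝ᵥ M *ᵥ s t + m₀) :=
        Real.sqrt_le_sqrt (dotProduct_le_of_posSemidef_sub_fromCols hCLMI _ _)
    _ ≤ _ := sqrt_le_max_of_hasDerivAt hV hdecay t ht

/-- Theorem 1 of the paper, single-mode case with cell boundaries not all through the
origin: with the augmented matrices `Ā = diag(A', 0)`, `C̄ = [C 0 0]`,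
`M̄ = diag(M, m₀)`, `Λ̄ = diag(λ I_N, 0)` (where `A' = diag(A + B K, F + G L)`),
the LMIs `M̄ - C̄ᵀ C̄ ⪰ 0` and `Āᵀ M̄ + M̄ Ā + Ēᵀ W Ē + Λ̄ M̄ ⪯ 0`, the interface
`u₁ = R ū₂ + (Q + R L) x₂ + K (x₁ - P x₂)`, the augmented joint state
`ω̄ = (x₁ - P x₂, x₂, 1)` remaining in the cell `Ē ω̄ ≥ 0`, and the bounds
`β₁, β₂, β₃` on the `M`-weighted norms of `v₁, v₂, c'`, the output error satisfies
`‖C x₁(t) - H x₂(t)‖ ≤ max (κ V(ω̄(0))) (√m₀ + (2/λ)(β₁ + β₂ + β₃))` for all `t ≥ 0`,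
where `V(ω̄) = (1/κ)√(ω̄ᵀM̄ω̄)`. -/
theorem stmt_13 {n m p q k b : ℕ}
    (A : Matrix (Fin n) (Fin n) ℝ) (B : Matrix (Fin n) (Fin p) ℝ)
    (C : Matrix (Fin k) (Fin n) ℝ)
    (F : Matrix (Fin m) (Fin m) ℝ) (G : Matrix (Fin m) (Fin q) ℝ)
    (H : Matrix (Fin k) (Fin m) ℝ) (L : Matrix (Fin q) (Fin m) ℝ)
    (P : Matrix (Fin n) (Fin m) ℝ) (Q : Matrix (Fin p) (Fin m) ℝ)
    (R : Matrix (Fin p) (Fin q) ℝ) (K : Matrix (Fin p) (Fin n) ℝ)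
    (hH : H = C * P) (hPF : P * F = A * P + B * Q)
    (M : Matrix (Fin n ⊕ Fin m) (Fin n ⊕ Fin m) ℝ) (hM : M.PosDef)
    (m₀ lam κ : ℝ) (hm₀ : 0 < m₀) (hlam : 0 < lam) (hκ : 0 < κ)
    (Ebar : Matrix (Fin b) ((Fin n ⊕ Fin m) ⊕ Unit) ℝ)
    (W : Matrix (Fin b) (Fin b) ℝ) (hW : W.IsSymm) (hWpos : ∀ i j, 0 ≤ W i j)
    (hCLMI : (Matrix.fromBlocks M 0 0 (Matrix.of fun _ _ => m₀)
        - (Matrix.fromCols (Matrix.fromCols C 0) 0 :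
            Matrix (Fin k) ((Fin n ⊕ Fin m) ⊕ Unit) ℝ)ᵀ
          * (Matrix.fromCols (Matrix.fromCols C 0) 0 :
            Matrix (Fin k) ((Fin n ⊕ Fin m) ⊕ Unit) ℝ)).PosSemidef)
    (hLMI : (-((Matrix.fromBlocks
            (Matrix.fromBlocks (A + B * K) 0 0 (F + G * L)) 0 0 0)ᵀ
          * Matrix.fromBlocks M 0 0 (Matrix.of fun _ _ => m₀)
        + Matrix.fromBlocks M 0 0 (Matrix.of fun _ _ => m₀)
          * Matrix.fromBlocks (Matrix.fromBlocks (A + B * K) 0 0 (F + G * L)) 0 0 0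
        + Ebarᵀ * W * Ebar
        + Matrix.fromBlocks (lam • (1 : Matrix (Fin n ⊕ Fin m) (Fin n ⊕ Fin m) ℝ)) 0 0 0
          * Matrix.fromBlocks M 0 0 (Matrix.of fun _ _ => m₀))).PosSemidef)
    (x₁ : ℝ → Fin n → ℝ) (x₂ : ℝ → Fin m → ℝ)
    (u₁ : ℝ → Fin p → ℝ) (ubar₂ : ℝ → Fin q → ℝ) (c : ℝ → Fin n → ℝ)
    (β₁ β₂ β₃ : ℝ)
    (hx₁ : ∀ t ≥ (0 : ℝ), HasDerivAt x₁ (A *ᵥ x₁ t + B *ᵥ u₁ t + c t) t)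
    (hu₁ : ∀ t ≥ (0 : ℝ),
      u₁ t = R *ᵥ ubar₂ t + (Q + R * L) *ᵥ x₂ t + K *ᵥ (x₁ t - P *ᵥ x₂ t))
    (hx₂ : ∀ t ≥ (0 : ℝ), HasDerivAt x₂ ((F + G * L) *ᵥ x₂ t + G *ᵥ ubar₂ t) t)
    (hcell : ∀ t ≥ (0 : ℝ),
      ∀ i, 0 ≤ (Ebar *ᵥ aug (Sum.elim (x₁ t - P *ᵥ x₂ t) (x₂ t))) i)
    (hβ₁ : ∀ t ≥ (0 : ℝ),
      Real.sqrt (Sum.elim ((B * R - P * G) *ᵥ (L *ᵥ x₂ t)) 0 ⬝ᵥ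
        M *ᵥ Sum.elim ((B * R - P * G) *ᵥ (L *ᵥ x₂ t)) 0) ≤ β₁)
    (hβ₂ : ∀ t ≥ (0 : ℝ),
      Real.sqrt (Sum.elim ((B * R - P * G) *ᵥ ubar₂ t) (G *ᵥ ubar₂ t) ⬝ᵥ
        M *ᵥ Sum.elim ((B * R - P * G) *ᵥ ubar₂ t) (G *ᵥ ubar₂ t)) ≤ β₂)
    (hβ₃ : ∀ t ≥ (0 : ℝ),
      Real.sqrt (Sum.elim (c t) 0 ⬝ᵥ M *ᵥ Sum.elim (c t) 0) ≤ β₃) :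
    ∀ t ≥ (0 : ℝ),
      ‖(EuclideanSpace.equiv (Fin k) ℝ).symm (C *ᵥ x₁ t - H *ᵥ x₂ t)‖ ≤
        max (κ * ((1 / κ) * Real.sqrt (aug (Sum.elim (x₁ 0 - P *ᵥ x₂ 0) (x₂ 0)) ⬝ᵥ
            Matrix.fromBlocks M 0 0 (Matrix.of fun _ _ => m₀) *ᵥ
              aug (Sum.elim (x₁ 0 - P *ᵥ x₂ 0) (x₂ 0)))))
          (Real.sqrt m₀ + (2 / lam) * (β₁ + β₂ + β₃)) :=
  stmt_13_general A B C F G H L P Q R K hH hPF M hM m₀ lam κ hm₀ hlam hκ Ebar W hWpos hCLMI hLMI x₁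
    x₂ u₁ ubar₂ c β₁ β₂ β₃ hx₁ hu₁ hx₂ hcell hβ₁ hβ₂ hβ₃
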